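/- arXiv:0904.0887 — 3 statements merged into one kernel-verified Lean document; each statement's English description precedes it below -/
import Mathlib

section
/- Let X = [0,1], p > 2, and regard L^p(X) as a dense subspace of H = L^2(X). Suppose (f_n) is a sequence of continuous functions on X with ‖f_n‖_1 → 0, and suppose there is a bounded operator Y : L^2(X) → L^2(X) such that ‖f_n φ − Yφ‖_2 → 0 for every φ ∈ L^p(X). Then Y = 0. -/
open MeasureTheory Filter
open scoped ENNReal NNReal Topology

/-!
Testing the hypotheses against a bounded `φ` gives `f n * φ → 0` in `L¹` and `f n * φ → Y φ`
in `L²`. Both modes of convergence imply convergence in measure, whose limits are unique a.e.,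
so `Y φ = 0`. Bounded (simple) functions are dense in `L²` and `Y` is continuous, so `Y = 0`.
-/

namespace MeasureTheory

variable {α : Type*} {m : MeasurableSpace α} {μ : Measure α}

theorem ae_eq_zero_of_tendsto_eLpNorm_of_tendsto_eLpNorm_sub {E : Type*} [NormedAddCommGroup E]
    {p q : ℝ≥0∞} (hp : p ≠ 0) (hq : q ≠ 0) {g : ℕ → α → E} {h : α → E}
    (hg : ∀ n, AEStronglyMeasurable (g n) μ) (hh : AEStronglyMeasurable h μ)
    (hg_zero : Tendsto (fun n => eLpNorm (g n) p μ) atTop (𝓝 0))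
    (hg_h : Tendsto (fun n => eLpNorm (g n - h) q μ) atTop (𝓝 0)) :
    h =ᵐ[μ] 0 := by
  have to_zero : TendstoInMeasure μ g atTop 0 :=
    tendstoInMeasure_of_tendsto_eLpNorm hp hg aestronglyMeasurable_zero (by simpa using hg_zero)
  exact tendstoInMeasure_ae_unique (tendstoInMeasure_of_tendsto_eLpNorm hq hg hh hg_h) to_zero

theorem tendsto_eLpNorm_mul_of_memLp_top {𝕜 : Type*} [RCLike 𝕜] {q : ℝ≥0∞}
    {f : ℕ → α → 𝕜} {φ : α → 𝕜} (hf : ∀ n, AEStronglyMeasurable (f n) μ) (hφ : MemLp φ ∞ μ)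
    (hf_zero : Tendsto (fun n => eLpNorm (f n) q μ) atTop (𝓝 0)) :
    Tendsto (fun n => eLpNorm (fun x => f n x * φ x) q μ) atTop (𝓝 0) := by
  have bound : Tendsto (fun n => eLpNorm (f n) q μ * eLpNorm φ ∞ μ) atTop (𝓝 0) := by
    simpa using ENNReal.Tendsto.mul_const hf_zero (.inr hφ.eLpNorm_ne_top)
  refine tendsto_of_tendsto_of_tendsto_of_le_of_le tendsto_const_nhds bound (fun _ => zero_le)
    fun n => ?_
  simpa only [Pi.smul_def, smul_eq_mul, Pi.mul_def] using
    eLpNorm_smul_le_eLpNorm_mul_eLpNorm_top q φ (hf n)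

end MeasureTheory

namespace ContinuousLinearMap

variable {α : Type*} {m : MeasurableSpace α} {μ : Measure α}

theorem eq_zero_of_forall_simpleFunc {𝕜 E F : Type*} [NormedField 𝕜]
    [NormedAddCommGroup E] [NormedSpace 𝕜 E] [AddCommMonoid F] [Module 𝕜 F] [TopologicalSpace F]
    [T2Space F] {p : ℝ≥0∞} [Fact (1 ≤ p)] (hp : p ≠ ∞) (T : Lp E p μ →L[𝕜] F)
    (hT : ∀ ψ : Lp.simpleFunc E p μ, T ψ = 0) : T = 0 :=
  coeFn_injective <|
    (Lp.simpleFunc.denseRange hp).equalizer T.continuous continuous_const (funext hT)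

theorem eq_zero_of_tendsto_eLpNorm_mul_sub_apply {𝕜 : Type*} [RCLike 𝕜]
    [IsFiniteMeasure μ] {p q r s : ℝ≥0∞} [Fact (1 ≤ r)] [Fact (1 ≤ s)] (hq : q ≠ 0) (hr : r ≠ ∞)
    {f : ℕ → α → 𝕜} (hf : ∀ n, AEStronglyMeasurable (f n) μ)
    (hf_zero : Tendsto (fun n => eLpNorm (f n) q μ) atTop (𝓝 0)) (Y : Lp 𝕜 r μ →L[𝕜] Lp 𝕜 s μ)
    (hY : ∀ φ : α → 𝕜, MemLp φ p μ → ∀ hφ : MemLp φ r μ,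
      Tendsto (fun n => eLpNorm (fun x => f n x * φ x - Y (hφ.toLp φ) x) s μ) atTop (𝓝 0)) :
    Y = 0 := by
  refine eq_zero_of_forall_simpleFunc hr Y fun ψ => Lp.eq_zero_iff_ae_eq_zero.mpr ?_
  set φ := Lp.simpleFunc.toSimpleFunc ψ
  have hφ : (φ.memLp_of_isFiniteMeasure r μ).toLp φ = ψ :=
    congrArg ((↑) : Lp.simpleFunc 𝕜 r μ → Lp 𝕜 r μ) (Lp.simpleFunc.toLp_toSimpleFunc ψ)
  have mul_sub_Y := hY φ (φ.memLp_of_isFiniteMeasure p μ) (φ.memLp_of_isFiniteMeasure r μ)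
  rw [hφ] at mul_sub_Y
  exact ae_eq_zero_of_tendsto_eLpNorm_of_tendsto_eLpNorm_sub hq
    (zero_lt_one.trans_le Fact.out).ne' (fun n => (hf n).mul φ.aestronglyMeasurable)
    (Lp.aestronglyMeasurable _) (tendsto_eLpNorm_mul_of_memLp_top hf (φ.memLp_top μ) hf_zero)
    mul_sub_Y

end ContinuousLinearMap

theorem stmt_10_general (p : ℝ)
    (f : ℕ → ℝ → ℂ)
    (hcont : ∀ n, ContinuousOn (f n) (Set.Icc (0:ℝ) 1))
    (h1 : Tendsto (fun n => eLpNorm (f n) 1 (volume.restrict (Set.Icc (0:ℝ) 1)))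
      atTop (nhds 0))
    (Y : Lp ℂ 2 (volume.restrict (Set.Icc (0:ℝ) 1)) →L[ℂ]
      Lp ℂ 2 (volume.restrict (Set.Icc (0:ℝ) 1)))
    (hY : ∀ (φ : ℝ → ℂ),
      MemLp φ (ENNReal.ofReal p) (volume.restrict (Set.Icc (0:ℝ) 1)) →
      ∀ (hφ2 : MemLp φ 2 (volume.restrict (Set.Icc (0:ℝ) 1))),
      Tendsto (fun n => eLpNorm
        (fun x => f n x * φ x - (Y (hφ2.toLp φ) : ℝ → ℂ) x) 2
        (volume.restrict (Set.Icc (0:ℝ) 1))) atTop (nhds 0)) :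
    Y = 0 :=
  Y.eq_zero_of_tendsto_eLpNorm_mul_sub_apply one_ne_zero ENNReal.ofNat_ne_top
    (fun n => (hcont n).aestronglyMeasurable measurableSet_Icc) h1 hY

/-- On X = [0,1], p > 2: if continuous f_n satisfy ‖f_n‖₁ → 0 and a
bounded operator Y on L² satisfies ‖f_n φ − Yφ‖₂ → 0 for each φ ∈ L^p, then Y = 0. -/
theorem stmt_10 (p : ℝ) (hp : 2 < p)
    (f : ℕ → ℝ → ℂ)
    (hcont : ∀ n, ContinuousOn (f n) (Set.Icc (0:ℝ) 1))
    (h1 : Tendsto (fun n => eLpNorm (f n) 1 (volume.restrict (Set.Icc (0:ℝ) 1)))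
      atTop (nhds 0))
    (Y : Lp ℂ 2 (volume.restrict (Set.Icc (0:ℝ) 1)) →L[ℂ]
      Lp ℂ 2 (volume.restrict (Set.Icc (0:ℝ) 1)))
    (hY : ∀ (φ : ℝ → ℂ),
      MemLp φ (ENNReal.ofReal p) (volume.restrict (Set.Icc (0:ℝ) 1)) →
      ∀ (hφ2 : MemLp φ 2 (volume.restrict (Set.Icc (0:ℝ) 1))),
      Tendsto (fun n => eLpNorm
        (fun x => f n x * φ x - (Y (hφ2.toLp φ) : ℝ → ℂ) x) 2
        (volume.restrict (Set.Icc (0:ℝ) 1))) atTop (nhds 0)) :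
    Y = 0 :=
  stmt_10_general p f hcont h1 Y hY
end

section
/- With notation as in the closability setting: for B ∈ A₀ define Ω₀^B(X,Y) := Ω₀(XB, YB). If Ω₀ is closable and right multiplication by B is τ-continuous, then Ω₀^B is closable for every B ∈ A₀. Conversely, if Ω₀^B is closable for all B ∈ A₀ and A₀ has a unit, then Ω₀ is closable. -/
open Filter
open scoped ENNReal NNReal

/-- Closability of a sesquilinear form on a subset A₀ of a topological ring A:
every net in A₀ converging to 0 in the topology of A and Ω-Cauchy has
Ω(X_α, X_α) → 0. -/
def FormClosable {A : Type*} [Ring A] [TopologicalSpace A]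
    (A₀ : Set A) (Ω : A → A → ℂ) : Prop :=
  ∀ (ι : Type) (_ : Nonempty ι) (_ : SemilatticeSup ι) (X : ι → A),
    (∀ i, X i ∈ A₀) →
    Tendsto X atTop (nhds 0) →
    (∀ ε : ℝ, 0 < ε → ∃ i₀ : ι, ∀ i ≥ i₀, ∀ j ≥ i₀,
      ‖Ω (X i - X j) (X i - X j)‖ < ε) →
    Tendsto (fun i => Ω (X i) (X i)) atTop (nhds 0)

theorem FormClosable.comp_addMonoidHom {A : Type*} [Ring A] [TopologicalSpace A]
    {S : Set A} {Ω : A → A → ℂ} (hΩ : FormClosable S Ω) (f : A →+ A)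
    (hfS : ∀ x ∈ S, f x ∈ S) (hf : ContinuousAt f 0) :
    FormClosable S (fun X Y => Ω (f X) (f Y)) := by
  intro ι hne hsl X hXS hX hcauchy
  refine hΩ ι hne hsl (fun i => f (X i)) (fun i => hfS _ (hXS i)) ?_ ?_
  · exact (map_zero f ▸ hf.tendsto).comp hX
  · simpa only [map_sub] using hcauchy

theorem FormClosable.comp_mul_right {A : Type*} [Ring A] [TopologicalSpace A]
    {S : Set A} {Ω : A → A → ℂ} (hΩ : FormClosable S Ω) {B : A}
    (hSB : ∀ x ∈ S, x * B ∈ S) (hB : ContinuousAt (fun x : A => x * B) 0) :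
    FormClosable S (fun X Y => Ω (X * B) (Y * B)) :=
  hΩ.comp_addMonoidHom (AddMonoidHom.mulRight B) hSB hB

theorem stmt_16_general {A : Type*} [Ring A] [Algebra ℂ A] [StarRing A] [StarModule ℂ A]
    [TopologicalSpace A]
    (A₀ : StarSubalgebra ℂ A)
    (Ω₀ : A → A → ℂ)
    (hmul : ∀ B : A, Continuous fun x : A => x * B) :
    (FormClosable (A₀ : Set A) Ω₀ →
      ∀ B ∈ A₀, FormClosable (A₀ : Set A) (fun X Y => Ω₀ (X * B) (Y * B))) ∧
    ((∀ B ∈ A₀, FormClosable (A₀ : Set A) (fun X Y => Ω₀ (X * B) (Y * B))) →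
      FormClosable (A₀ : Set A) Ω₀) :=
  ⟨fun hΩ B hB => hΩ.comp_mul_right (fun _ hx => mul_mem hx hB) (hmul B).continuousAt,
    fun h => by simpa only [mul_one] using h 1 (one_mem A₀)⟩

/-- with right multiplications continuous, if Ω₀ is closable then
each Ω₀^B(X,Y) := Ω₀(XB, YB), B ∈ A₀, is closable; conversely if all Ω₀^B are
closable (A₀ unital), then Ω₀ is closable. -/
theorem stmt_16 {A : Type*} [Ring A] [Algebra ℂ A] [StarRing A] [StarModule ℂ A]
    [TopologicalSpace A] [IsTopologicalRing A] [ContinuousStar A]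
    (A₀ : StarSubalgebra ℂ A) (hdense : Dense (A₀ : Set A))
    (Ω₀ : A → A → ℂ)
    (hadd₁ : ∀ x y z, Ω₀ (x + y) z = Ω₀ x z + Ω₀ y z)
    (hadd₂ : ∀ x y z, Ω₀ x (y + z) = Ω₀ x y + Ω₀ x z)
    (hsmul₁ : ∀ (c : ℂ) x y, Ω₀ (c • x) y = c * Ω₀ x y)
    (hsmul₂ : ∀ (c : ℂ) x y, Ω₀ x (c • y) = (starRingEnd ℂ) c * Ω₀ x y)
    (hpos : ∀ x ∈ A₀, 0 ≤ (Ω₀ x x).re)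
    (hmul : ∀ B : A, Continuous fun x : A => x * B) :
    (FormClosable (A₀ : Set A) Ω₀ →
      ∀ B ∈ A₀, FormClosable (A₀ : Set A) (fun X Y => Ω₀ (X * B) (Y * B))) ∧
    ((∀ B ∈ A₀, FormClosable (A₀ : Set A) (fun X Y => Ω₀ (X * B) (Y * B))) →
      FormClosable (A₀ : Set A) Ω₀) :=
  stmt_16_general A₀ Ω₀ hmul
end

section
/- Let D be a dense subspace of a Hilbert space H, and let B(D,H) denote linear maps T : D → H that are restrictions to D of bounded operators on H. Equip B(D,H) with the strong* topology given by seminorms T ↦ max(‖Tf‖, ‖T†f‖), f ∈ D, where T† is the restriction of the Hilbert adjoint. Then a strong*-Cauchy net (T_α) in B(D,H) converges pointwise on D to a linear map T : D → H which admits an adjoint defined on D (i.e., there is S : D → H with ⟨Tf, g⟩ = ⟨f, Sg⟩ for all f, g ∈ D), but T need not be bounded. -/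
open Filter
open scoped InnerProductSpace

/-- Let D be a dense subspace of a Hilbert space H and (T_α) a net
of bounded operators on H which is strong*-Cauchy on D (both T_α f and T_α* f are
Cauchy for each f ∈ D). Then (T_α) converges pointwise on D to a linear map
Tlim : D → H admitting a formal adjoint Slim defined on D. -/
theorem stmt_18 {H : Type*} [NormedAddCommGroup H] [InnerProductSpace ℂ H]
    [CompleteSpace H]
    (D : Submodule ℂ H) (hD : Dense (D : Set H))
    (ι : Type*) [Nonempty ι] [SemilatticeSup ι]
    (T : ι → H →L[ℂ] H)
    (hC : ∀ f : D, CauchySeq (fun α => T α (f : H)) ∧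
      CauchySeq (fun α => ContinuousLinearMap.adjoint (T α) (f : H))) :
    ∃ (Tlim Slim : D →ₗ[ℂ] H),
      (∀ f : D, Tendsto (fun α => T α (f : H)) atTop (nhds (Tlim f))) ∧
      (∀ f : D, Tendsto (fun α => ContinuousLinearMap.adjoint (T α) (f : H))
        atTop (nhds (Slim f))) ∧
      ∀ f g : D, ⟪Tlim f, (g : H)⟫_ℂ = ⟪(f : H), Slim g⟫_ℂ := by
  choose Tl hTl using fun f : D => cauchySeq_tendsto_of_complete (hC f).1
  choose Sl hSl using fun f : D => cauchySeq_tendsto_of_complete (hC f).2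
  refine ⟨{ toFun := Tl
            map_add' := fun f g => ?_
            map_smul' := fun c f => ?_ },
          { toFun := Sl
            map_add' := fun f g => ?_
            map_smul' := fun c f => ?_ },
          hTl, hSl, fun f g => ?_⟩
  · refine tendsto_nhds_unique (hTl (f + g)) ?_
    simpa using (hTl f).add (hTl g)
  · refine tendsto_nhds_unique (hTl (c • f)) ?_
    simpa using (hTl f).const_smul c
  · refine tendsto_nhds_unique (hSl (f + g)) ?_
    simpa using (hSl f).add (hSl g)
  · refine tendsto_nhds_unique (hSl (c • f)) ?_
    simpa using (hSl f).const_smul c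
  · refine tendsto_nhds_unique
      (((hTl f).inner (tendsto_const_nhds : Tendsto (fun _ : ι => (g : H)) atTop _)))
      ?_
    have : (fun α => ⟪T α (f : H), (g : H)⟫_ℂ)
        = fun α => ⟪(f : H), ContinuousLinearMap.adjoint (T α) (g : H)⟫_ℂ := by
      funext α
      rw [← ContinuousLinearMap.adjoint_inner_right]
    rw [this]
    exact (tendsto_const_nhds : Tendsto (fun _ : ι => (f : H)) atTop _).inner (hSl g)
end
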